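/- Let R be a fusion ring graded by a finite group G, i.e., B = ⊔_{g∈G} B_g with B_g·B_h having constituents in B_{gh}, B_1 nonempty containing 1. Suppose F : R → R' is a ring homomorphism to another fusion ring sending basis elements to nonnegative combinations of basis elements, commuting with *, with B_1 = { X ∈ B : F(X) = FPdim(X)·1 }. Then every X ∈ B satisfies: F(X) = FPdim(X)·M for some basis element M of R' with M·M* = 1 (an invertible element). -/

import Mathlib

open Finset

/-- A fusion ring with distinguished basis indexed by `ι`: nonnegative integer structure
constants `N`, unit basis element `one`, involution `star`, and the Frobenius–Perron
dimension `fp`, the (unique) ring homomorphism to `ℝ` positive on the basis. -/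
structure FusionRing (ι : Type) [Fintype ι] [DecidableEq ι] where
  N : ι → ι → ι → ℕ
  one : ι
  star : ι → ι
  assoc : ∀ a b c d, ∑ x, N a b x * N x c d = ∑ x, N b c x * N a x d
  one_mul : ∀ a b, N one a b = if a = b then 1 else 0
  mul_one : ∀ a b, N a one b = if a = b then 1 else 0
  star_invol : ∀ a, star (star a) = a
  N_one : ∀ a b, N a b one = if b = star a then 1 else 0
  N_star : ∀ a b c, N a b c = N (star b) (star a) (star c)
  fp : ι → ℝ
  fp_pos : ∀ a, 0 < fp a
  fp_one : fp one = 1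
  fp_hom : ∀ a b, fp a * fp b = ∑ c, (N a b c : ℝ) * fp c

namespace FusionRing

variable {ι : Type} [Fintype ι] [DecidableEq ι] (R : FusionRing ι)

set_option linter.unusedVariables false
open scoped Classical

/-- Multiplication of `R ⊗ ℝ`, written on coefficient vectors in the basis `ι`. -/
noncomputable def mul (x y : ι → ℝ) : ι → ℝ :=
  fun c => ∑ a, ∑ b, x a * y b * (R.N a b c : ℝ)

/-- The basis element `a` viewed as a coefficient vector. -/
def e (R : FusionRing ι) (a : ι) : ι → ℝ := fun c => if c = a then 1 else 0

/-- The linear extension of the involution `*`. -/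
def starVec (x : ι → ℝ) : ι → ℝ := fun c => x (R.star c)

/-- The standard bilinear form, `m(a,b) = δ_{a,b}` on basis elements. -/
def m (R : FusionRing ι) (x y : ι → ℝ) : ℝ := ∑ a, x a * y a

/-- `S` is the basis of a fusion subring: contains the unit, closed under `*`, and closed
under taking constituents of products. -/
def IsFusionSubset (S : Finset ι) : Prop :=
  R.one ∈ S ∧ (∀ a ∈ S, R.star a ∈ S) ∧ ∀ a ∈ S, ∀ b ∈ S, ∀ c, 0 < R.N a b c → c ∈ S

/-- The regular element `R_S = ∑_{d ∈ S} FPdim(d)·d` of a fusion subset `S`. -/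
def reg (S : Finset ι) : ι → ℝ := fun c => if c ∈ S then R.fp c else 0

/-- `FPdim(S) = ∑_{d ∈ S} FPdim(d)²`. -/
def fpdimS (S : Finset ι) : ℝ := ∑ d ∈ S, R.fp d ^ 2

/-- The double coset relation relative to fusion subsets `S`, `T`:
`X ∼ Y` iff `Y` occurs with positive multiplicity in `D·X·E` for some `D ∈ S`, `E ∈ T`. -/
def dcRel (S T : Finset ι) (X Y : ι) : Prop :=
  ∃ D ∈ S, ∃ E ∈ T, 0 < ∑ a, R.N D X a * R.N a E Y

/-- `A_i = ∑_{Y ∈ Λ_i} FPdim(Y)·Y` where `Λ_i` is the double coset of `X`. -/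
noncomputable def classVec (S T : Finset ι) (X : ι) : ι → ℝ :=
  fun c => if R.dcRel S T X c then R.fp c else 0

end FusionRing

/-!
All constituents of `X ⊗ X*` have degree `1`, so `F` sends them to multiples of `1` and
`F(X)·F(X)* = FPdim(X)²·1`. Write `F(X) = ∑ vₘ m` with `vₘ ≥ 0`. The coefficient of `1` gives
`∑ vₘ² = FPdim(X)²`, and applying `FPdim` gives `∑ vₘ FPdim(m) = FPdim(X)`. As `FPdim(m) ≥ 1`,
`(∑ vₘ)² ≤ FPdim(X)² = ∑ vₘ²`, which for nonnegative coefficients forces `v` to be supported on a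
single `M`; then `v_M = FPdim(X)` and `FPdim(M) = 1`, so `M` is invertible.
-/

theorem eq_pi_single_of_sq_sum_le_sum_sq {κ R : Type*} [Fintype κ] [DecidableEq κ]
    [CommRing R] [LinearOrder R] [IsStrictOrderedRing R] {v : κ → R} (hv : ∀ i, 0 ≤ v i)
    (h : (∑ i, v i) ^ 2 ≤ ∑ i, v i ^ 2) {j : κ} (hj : v j ≠ 0) :
    v = Pi.single j (∑ i, v i) := by
  set σ := ∑ i, v i
  have hle : ∀ i, v i ≤ σ := fun i => single_le_sum (fun k _ => hv k) (mem_univ i)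
  have hvanish : ∀ i, i ≠ j → v i = 0 := by
    intro i hij
    by_contra hi
    have hpair : v i + v j ≤ σ := by
      simpa [sum_pair hij] using
        sum_le_sum_of_subset_of_nonneg (subset_univ {i, j}) fun k _ _ => hv k
    -- the square `v i ^ 2` is strictly below `v i * σ` because `v j > 0` also contributes to `σ`
    have hlt : ∑ k, v k ^ 2 < ∑ k, v k * σ := by
      refine sum_lt_sum (fun k _ => ?_) ⟨i, mem_univ i, ?_⟩
      · rw [sq]; exact mul_le_mul_of_nonneg_left (hle k) (hv k)
      · rw [sq]
        exact mul_lt_mul_of_pos_left (by linarith [(hv j).lt_of_ne' hj]) ((hv i).lt_of_ne' hi)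
    rw [← sum_mul, ← sq] at hlt
    exact absurd h (not_le.mpr hlt)
  have hσ : σ = v j := sum_eq_single j (fun i _ hij => hvanish i hij) (by simp)
  funext i
  rcases eq_or_ne i j with rfl | hij
  · simp [hσ]
  · simp [hvanish i hij, hij]

namespace FusionRing

variable {ι : Type} [Fintype ι] [DecidableEq ι] (R : FusionRing ι)

theorem N_rotate (a b c : ι) : R.N a b (R.star c) = R.N b c (R.star a) := by
  have h := R.assoc a b c R.one
  simp only [R.N_one] at h
  have hstar : ∀ x : ι, (c = R.star x) = (x = R.star c) := fun x =>
    propext ⟨fun h => by rw [h, R.star_invol], fun h => by rw [h, R.star_invol]⟩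
  simp only [hstar, mul_ite, mul_zero, sum_ite_eq', mem_univ, if_true] at h
  simpa using h

theorem N_star_left (a b c : ι) : R.N a b c = R.N (R.star a) c b := by
  rw [R.N_star a b c, R.N_rotate, R.star_invol]

theorem N_self_star_one (a : ι) : R.N a (R.star a) R.one = 1 := by
  simp [R.N_one]

theorem fp_mul_sum_fp_sq (a : ι) :
    R.fp a * ∑ b, R.fp b ^ 2 = ∑ b, ∑ c, (R.N a b c : ℝ) * R.fp c * R.fp b := by
  rw [mul_sum]
  refine sum_congr rfl fun b _ => ?_
  rw [sq, ← mul_assoc, R.fp_hom, sum_mul]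

theorem fp_star (a : ι) : R.fp (R.star a) = R.fp a := by
  have hS : 0 < ∑ b, R.fp b ^ 2 :=
    sum_pos (fun b _ => pow_pos (R.fp_pos b) 2) ⟨R.one, mem_univ _⟩
  refine mul_right_cancel₀ hS.ne' ?_
  rw [R.fp_mul_sum_fp_sq, R.fp_mul_sum_fp_sq, sum_comm]
  refine sum_congr rfl fun b _ => sum_congr rfl fun c _ => ?_
  rw [← R.N_star_left]
  ring

theorem one_le_fp (a : ι) : 1 ≤ R.fp a := by
  have hsq : 1 ≤ R.fp a ^ 2 :=
    calc (1 : ℝ) = (R.N a (R.star a) R.one : ℝ) * R.fp R.one := by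
          simp [R.N_self_star_one, R.fp_one]
      _ ≤ ∑ c, (R.N a (R.star a) c : ℝ) * R.fp c :=
          single_le_sum (fun c _ => mul_nonneg (Nat.cast_nonneg _) (R.fp_pos c).le) (mem_univ _)
      _ = R.fp a ^ 2 := by rw [← R.fp_hom, R.fp_star, sq]
  nlinarith [R.fp_pos a]

theorem N_self_star_of_fp_eq_one {a : ι} (ha : R.fp a = 1) (c : ι) :
    R.N a (R.star a) c = if c = R.one then 1 else 0 := by
  split_ifs with hc
  · rw [hc, R.N_self_star_one]
  have hsum : ∑ x, (R.N a (R.star a) x : ℝ) * R.fp x = 1 := by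
    rw [← R.fp_hom, R.fp_star, ha, _root_.mul_one]
  have hpair : (R.N a (R.star a) c : ℝ) * R.fp c + 1 ≤ 1 := by
    have := sum_le_sum_of_subset_of_nonneg (subset_univ {c, R.one})
      fun x _ _ => mul_nonneg (Nat.cast_nonneg (R.N a (R.star a) x)) (R.fp_pos x).le
    simpa [sum_pair hc, R.N_self_star_one, R.fp_one, hsum] using this
  have : (R.N a (R.star a) c : ℝ) ≤ 0 := by nlinarith [R.fp_pos c]
  exact_mod_cast this.antisymm (Nat.cast_nonneg _)

theorem mul_apply_one (x y : ι → ℝ) : R.mul x y R.one = ∑ a, x a * y (R.star a) := by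
  simp [mul, R.N_one]

theorem sum_mul_mul_fp (x y : ι → ℝ) :
    ∑ c, R.mul x y c * R.fp c = (∑ a, x a * R.fp a) * ∑ b, y b * R.fp b := by
  calc ∑ c, R.mul x y c * R.fp c
      = ∑ a, ∑ b, x a * y b * ∑ c, (R.N a b c : ℝ) * R.fp c := by
        simp only [mul, sum_mul, mul_sum]
        rw [sum_comm]
        refine sum_congr rfl fun a _ => ?_
        rw [sum_comm]
        simp only [mul_assoc]
    _ = (∑ a, x a * R.fp a) * ∑ b, y b * R.fp b := by
        rw [sum_mul_sum]
        refine sum_congr rfl fun a _ => sum_congr rfl fun b _ => ?_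
        rw [← R.fp_hom]
        ring

theorem sum_starVec_mul_fp (x : ι → ℝ) :
    ∑ a, R.starVec x a * R.fp a = ∑ a, x a * R.fp a :=
  Fintype.sum_bijective R.star (Function.Involutive.bijective R.star_invol) _ _
    fun a => by rw [starVec, R.fp_star]

theorem exists_fp_eq_one_of_mul_starVec_eq {x : ι → ℝ} (hx : ∀ a, 0 ≤ x a) {d : ℝ}
    (hd : 0 < d) (h : R.mul x (R.starVec x) = d ^ 2 • R.e R.one) :
    ∃ M, R.fp M = 1 ∧ x = d • R.e M := by
  set σ := ∑ a, x a
  have hsq : ∑ a, x a ^ 2 = d ^ 2 := by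
    have h1 := congrFun h R.one
    simpa [mul_apply_one, starVec, R.star_invol, e, sq] using h1
  have hfp : ∑ a, x a * R.fp a = d := by
    have h1 := congrArg (fun y => ∑ c, y c * R.fp c) h
    simp only [sum_mul_mul_fp, sum_starVec_mul_fp] at h1
    have hs0 : 0 ≤ ∑ a, x a * R.fp a := sum_nonneg fun a _ => mul_nonneg (hx a) (R.fp_pos a).le
    have h2 : (∑ a, x a * R.fp a) ^ 2 = d ^ 2 := by simpa [e, R.fp_one, sq] using h1
    exact (pow_left_inj₀ hs0 hd.le two_ne_zero).mp h2
  have hσd : σ ≤ d :=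
    hfp ▸ sum_le_sum fun a _ => le_mul_of_one_le_right (hx a) (R.one_le_fp a)
  obtain ⟨M, hM⟩ : ∃ M, x M ≠ 0 := by
    by_contra! h0
    have hzero : ∑ a, x a ^ 2 = 0 := by simp [h0]
    exact (pow_pos hd 2).ne' (hsq.symm.trans hzero)
  have hsingle : x = Pi.single M σ :=
    eq_pi_single_of_sq_sum_le_sum_sq hx
      (hsq ▸ pow_le_pow_left₀ (sum_nonneg fun a _ => hx a) hσd 2) hM
  have hσ : σ = d := by
    have h1 : σ ^ 2 = d ^ 2 := by
      rw [← hsq, hsingle]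
      simp [Pi.single_apply]
    exact (pow_left_inj₀ (sum_nonneg fun a _ => hx a) hd.le two_ne_zero).mp h1
  rw [hσ] at hsingle
  refine ⟨M, ?_, ?_⟩
  · rw [hsingle] at hfp
    simpa [Pi.single_apply, hd.ne'] using hfp
  · funext c
    simp [hsingle, e, Pi.single_apply]

end FusionRing

theorem graded_normal_image_general {ι ι' G : Type} [Fintype ι] [DecidableEq ι]
    [Fintype ι'] [DecidableEq ι'] [Group G]
    (R : FusionRing ι) (R' : FusionRing ι')
    (deg : ι → G)
    (hdeg_mul : ∀ a b c, 0 < R.N a b c → deg c = deg a * deg b)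
    (hdeg_star : ∀ a, deg (R.star a) = (deg a)⁻¹)
    (Fm : ι → ι' → ℝ)
    (hF_nonneg : ∀ a c, 0 ≤ Fm a c)
    (hF_mul : ∀ a b, R'.mul (Fm a) (Fm b) = fun c' => ∑ c, (R.N a b c : ℝ) * Fm c c')
    (hF_star : ∀ a c, Fm (R.star a) c = Fm a (R'.star c))
    (hker : ∀ X : ι, deg X = 1 ↔ Fm X = R.fp X • R'.e R'.one) :
    ∀ X : ι, ∃ M : ι',
      (∀ c, R'.N M (R'.star M) c = if c = R'.one then 1 else 0) ∧
      Fm X = R.fp X • R'.e M := by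
  intro X
  have htriv : ∀ c, 0 < R.N X (R.star X) c → Fm c = R.fp c • R'.e R'.one := fun c hc =>
    (hker c).mp (by rw [hdeg_mul _ _ _ hc, hdeg_star, mul_inv_cancel])
  have hXX : R'.mul (Fm X) (R'.starVec (Fm X)) = R.fp X ^ 2 • R'.e R'.one := by
    have hstar : R'.starVec (Fm X) = Fm (R.star X) := funext fun c => (hF_star X c).symm
    rw [hstar, hF_mul]
    funext c'
    calc ∑ c, (R.N X (R.star X) c : ℝ) * Fm c c'
        = ∑ c, (R.N X (R.star X) c : ℝ) * R.fp c * R'.e R'.one c' := by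
          refine sum_congr rfl fun c _ => ?_
          rcases (R.N X (R.star X) c).eq_zero_or_pos with h0 | hpos
          · simp [h0]
          · rw [htriv c hpos, Pi.smul_apply, smul_eq_mul, mul_assoc]
      _ = (R.fp X ^ 2 • R'.e R'.one) c' := by
          rw [← sum_mul, ← R.fp_hom, R.fp_star, Pi.smul_apply, smul_eq_mul, sq]
  obtain ⟨M, hM, hFX⟩ := R'.exists_fp_eq_one_of_mul_starVec_eq (hF_nonneg X) (R.fp_pos X) hXX
  exact ⟨M, R'.N_self_star_of_fp_eq_one hM, hFX⟩

/-- Let `R` be a fusion ring graded by a finite group `G` (via `deg`), and let `F` be a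
ring homomorphism to a fusion ring `R'` given on basis elements by the nonnegative
coefficient matrix `Fm`, commuting with `*`, whose kernel
`{ X : F(X) = FPdim(X)·1 }` is exactly the trivial component `B₁`. Then every basis
element `X` satisfies `F(X) = FPdim(X)·M` for some basis element `M` of `R'` with
`M·M* = 1` (an invertible element). -/
theorem graded_normal_image {ι ι' G : Type} [Fintype ι] [DecidableEq ι]
    [Fintype ι'] [DecidableEq ι'] [Group G] [Finite G]
    (R : FusionRing ι) (R' : FusionRing ι')
    (deg : ι → G)
    (hdeg_one : deg R.one = 1)
    (hdeg_mul : ∀ a b c, 0 < R.N a b c → deg c = deg a * deg b)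
    (hdeg_star : ∀ a, deg (R.star a) = (deg a)⁻¹)
    (Fm : ι → ι' → ℝ)
    (hF_nonneg : ∀ a c, 0 ≤ Fm a c)
    (hF_one : Fm R.one = R'.e R'.one)
    (hF_mul : ∀ a b, R'.mul (Fm a) (Fm b) = fun c' => ∑ c, (R.N a b c : ℝ) * Fm c c')
    (hF_star : ∀ a c, Fm (R.star a) c = Fm a (R'.star c))
    (hker : ∀ X : ι, deg X = 1 ↔ Fm X = R.fp X • R'.e R'.one) :
    ∀ X : ι, ∃ M : ι',
      (∀ c, R'.N M (R'.star M) c = if c = R'.one then 1 else 0) ∧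
      Fm X = R.fp X • R'.e M :=
  graded_normal_image_general R R' deg hdeg_mul hdeg_star Fm hF_nonneg hF_mul hF_star hker
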